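/- arXiv:2208.12919 — 3 statements merged into one kernel-verified Lean document; each statement's English description precedes it below -/
import Mathlib

section
/- Let q be a prime power, F_{q^3} the cubic extension of F_q, Tr the trace and N the norm from F_{q^3} to F_q, and let α in F_q be such that x^2 - x - α is irreducible over F_q. Then the number of d in F_{q^3} satisfying Tr(d) + Tr(d^{q^2+q}) + 1 + α = 0 is exactly q^2 - q. -/
/-!
Let `r` and `s = 1 - r` be the roots of `X² - X - α` in an algebraic closure of `𝔽_{q³}`; they
lie in `𝔽_{q²} \ 𝔽_q`, so Frobenius swaps them. Writing `x, x^q, x^{q²}` for the conjugates of `d`,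
the identity `∏ (r + xᵢ) - ∏ (s + xᵢ) = (r - s) (e₁ + e₂ + 1 + α)` turns the condition into
`∏ (r + xᵢ) = ∏ (s + xᵢ)`, i.e. `t ^ (q² - q + 1) = 1` for `t = (s + d) / (r + d)`. The Möbius map
`d ↦ t` is a bijection from `𝔽_{q³}` onto the `(q³ + 1)`-th roots of unity other than `1`, and
`q² - q + 1` divides `q³ + 1`, so the solutions correspond to the `q² - q` nontrivial
`(q² - q + 1)`-th roots of unity.
-/

open Polynomial

theorem exists_algebraMap_eq_of_pow_card_eq {K L : Type*} [Field K] [Fintype K] [Field L]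
    [Algebra K L] {x : L} (hx : x ^ Fintype.card K = x) : ∃ c : K, algebraMap K L c = x := by
  have hne : (X ^ Fintype.card K - X : K[X]) ≠ 0 :=
    FiniteField.X_pow_card_sub_X_ne_zero K Fintype.one_lt_card
  have hroots : (X ^ Fintype.card K - X : K[X]).roots.map (algebraMap K L) =
      ((X ^ Fintype.card K - X : K[X]).map (algebraMap K L)).roots := by
    refine roots_map_of_injective_of_card_eq_natDegree (algebraMap K L).injective ?_
    rw [FiniteField.roots_X_pow_card_sub_X, FiniteField.X_pow_card_sub_X_natDegree_eq K
      Fintype.one_lt_card]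
    rfl
  have hx' : x ∈ ((X ^ Fintype.card K - X : K[X]).map (algebraMap K L)).roots := by
    rw [mem_roots (Polynomial.map_ne_zero hne)]
    simp [hx]
  rw [← hroots, Multiset.mem_map] at hx'
  obtain ⟨c, -, hc⟩ := hx'
  exact ⟨c, hc⟩

section Mobius

variable {K W : Type*} [Field K] [Fintype K] [Field W] [Algebra K W] {r s : W}

local notation "Q" => Fintype.card K

theorem add_algebraMap_ne_zero_of_pow_card_ne (hr : r ^ Q ≠ r) (x : K) :
    r + algebraMap K W x ≠ 0 := by
  intro h
  apply hr
  rw [eq_neg_of_add_eq_zero_left h, ← map_neg, ← map_pow, FiniteField.pow_card]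

theorem div_add_algebraMap_injective (hr : r ^ Q ≠ r) (hrs : r ≠ s) :
    Function.Injective fun x : K ↦ (s + algebraMap K W x) / (r + algebraMap K W x) := by
  intro x y hxy
  rw [div_eq_div_iff (add_algebraMap_ne_zero_of_pow_card_ne hr x)
    (add_algebraMap_ne_zero_of_pow_card_ne hr y)] at hxy
  have h : (r - s) * (algebraMap K W x - algebraMap K W y) = 0 := by linear_combination hxy
  exact (algebraMap K W).injective <| sub_eq_zero.mp <|
    (mul_eq_zero.mp h).resolve_left (sub_ne_zero.mpr hrs)

/-- `x = (s - t r) / (t - 1)` solves `(s + x) / (r + x) = t`; it lies in `K` because `t ^ Q = t⁻¹`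
and `· ^ Q` swaps `r` and `s`. -/
theorem exists_div_add_algebraMap_eq (hr : r ^ Q = s) (hs : s ^ Q = r) (hrs : r ≠ s) {t : W}
    (ht : t ^ (Q + 1) = 1) (ht1 : t ≠ 1) :
    ∃ x : K, (s + algebraMap K W x) / (r + algebraMap K W x) = t := by
  have ht0 : t ≠ 0 := by rintro rfl; simp at ht
  have htQ : t ^ Q = t⁻¹ := eq_inv_of_mul_eq_one_left (by rwa [← pow_succ])
  have ht1' : t - 1 ≠ 0 := sub_ne_zero.mpr ht1
  have htinv1 : t⁻¹ - 1 ≠ 0 := sub_ne_zero.mpr (inv_ne_one.mpr ht1)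
  obtain ⟨x, hx⟩ : ∃ x : K, algebraMap K W x = (s - t * r) / (t - 1) := by
    refine exists_algebraMap_eq_of_pow_card_eq ?_
    have h := map_div₀ (FiniteField.frobeniusAlgHom K W) (s - t * r) (t - 1)
    simp only [map_sub, map_mul, map_one, FiniteField.coe_frobeniusAlgHom, hr, hs, htQ] at h
    rw [h, div_eq_div_iff htinv1 ht1']
    field_simp
    ring
  refine ⟨x, ?_⟩
  rw [hx, add_div' _ _ _ ht1', add_div' _ _ _ ht1', div_div_div_cancel_right₀ ht1',
    show s * (t - 1) + (s - t * r) = t * (s - r) by ring,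
    show r * (t - 1) + (s - t * r) = s - r by ring,
    mul_div_cancel_right₀ _ (sub_ne_zero.mpr hrs.symm)]

theorem image_div_add_algebraMap (hr : r ^ Q = s) (hs : s ^ Q = r) (hrs : r ≠ s) {n : ℕ}
    (hn : n ∣ Q + 1) {P : K → Prop}
    (hP : ∀ x, P x ↔ ((s + algebraMap K W x) / (r + algebraMap K W x)) ^ n = 1) :
    (fun x ↦ (s + algebraMap K W x) / (r + algebraMap K W x)) '' {x | P x} =
      {t | t ^ n = 1 ∧ t ≠ 1} := by
  ext t
  constructor
  · rintro ⟨x, hx, rfl⟩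
    refine ⟨(hP x).mp hx, fun h ↦ hrs ?_⟩
    rw [div_eq_one_iff_eq (add_algebraMap_ne_zero_of_pow_card_ne (hr.trans_ne hrs.symm) x)] at h
    exact (add_right_cancel h).symm
  · rintro ⟨htn, ht1⟩
    obtain ⟨k, hk⟩ := hn
    obtain ⟨x, rfl⟩ :=
      exists_div_add_algebraMap_eq hr hs hrs (by rw [hk, pow_mul, htn, one_pow]) ht1
    exact ⟨x, (hP x).mpr htn, rfl⟩

end Mobius

section Frobenius

variable {F W : Type*} [Field F] [Fintype F] [Field W] [Algebra F W]

local notation "q" => Fintype.card F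

theorem pow_card_ne_self_of_irreducible {α : F}
    (hα : Irreducible (X ^ 2 - X - C α)) {r : W} (hr : r ^ 2 - r = algebraMap F W α) :
    r ^ q ≠ r := by
  intro hrq
  obtain ⟨c, rfl⟩ := exists_algebraMap_eq_of_pow_card_eq hrq
  have hc : (X ^ 2 - X - C α).IsRoot c := by
    apply (algebraMap F W).injective
    simpa [sub_eq_zero] using hr
  have hdeg := degree_eq_one_of_irreducible_of_root hα hc
  rw [show (X ^ 2 - X - C α : F[X]).degree = 2 by compute_degree!] at hdeg
  exact absurd hdeg (by decide)

theorem pow_card_eq_one_sub_of_irreducible {α : F}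
    (hα : Irreducible (X ^ 2 - X - C α)) {r : W} (hr : r ^ 2 - r = algebraMap F W α) :
    r ^ q = 1 - r := by
  have hrq : (r ^ q) ^ 2 - r ^ q = algebraMap F W α := by
    have h := congrArg (FiniteField.frobeniusAlgHom F W) hr
    simpa only [map_sub, map_pow, AlgHom.commutes, FiniteField.coe_frobeniusAlgHom] using h
  have h : (r ^ q - r) * (r ^ q - (1 - r)) = 0 := by linear_combination hrq - hr
  exact sub_eq_zero.mp <| (mul_eq_zero.mp h).resolve_left <|
    sub_ne_zero.mpr (pow_card_ne_self_of_irreducible hα hr)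

theorem div_add_pow_card {r s : W} (hr : r ^ q = s) (hs : s ^ q = r) (x : W) :
    ((s + x) / (r + x)) ^ q = (r + x ^ q) / (s + x ^ q) := by
  have h := map_div₀ (FiniteField.frobeniusAlgHom F W) (s + x) (r + x)
  simpa only [map_add, FiniteField.coe_frobeniusAlgHom, hr, hs] using h

theorem mul_mul_eq_mul_mul_iff_pow_eq_one {r s x : W} (hr : r ^ q = s) (hs : s ^ q = r)
    (hrx : ∀ i, r + x ^ q ^ i ≠ 0) (hsx : ∀ i, s + x ^ q ^ i ≠ 0) :
    (r + x) * (r + x ^ q) * (r + x ^ q ^ 2) = (s + x) * (s + x ^ q) * (s + x ^ q ^ 2) ↔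
      ((s + x) / (r + x)) ^ (q ^ 2 - q + 1) = 1 := by
  set t := (s + x) / (r + x)
  have hx0 : r + x ≠ 0 := by simpa using hrx 0
  have ht0 : t ≠ 0 := div_ne_zero (by simpa using hsx 0) hx0
  have htq : t ^ q = (r + x ^ q) / (s + x ^ q) := div_add_pow_card hr hs x
  have htq2 : t ^ q ^ 2 = (s + x ^ q ^ 2) / (r + x ^ q ^ 2) := by
    rw [sq, pow_mul, htq, div_add_pow_card hs hr, ← pow_mul, ← sq]
  have hexp : q ^ 2 + 1 = (q ^ 2 - q + 1) + q := by
    have := Nat.le_self_pow two_ne_zero q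
    omega
  calc _ ↔ t * t ^ q ^ 2 = t ^ q := by
        rw [htq, htq2, div_mul_div_comm, div_eq_div_iff (mul_ne_zero hx0 (by simpa using hrx 2))
          (by simpa using hsx 1)]
        constructor <;> intro h <;> linear_combination -h
    _ ↔ t ^ (q ^ 2 - q + 1) * t ^ q = 1 * t ^ q := by
        rw [← pow_add, ← hexp, one_mul, pow_succ' t]
    _ ↔ _ := mul_left_inj' (pow_ne_zero q ht0)

theorem cast_card_sq_sub_card_add_one : ((q ^ 2 - q + 1 : ℕ) : W) = 1 := by
  have hq : (q : W) = 0 := by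
    rw [← map_natCast (algebraMap F W), FiniteField.cast_card_eq_zero, map_zero]
  rw [Nat.cast_add, Nat.cast_sub (Nat.le_self_pow two_ne_zero q)]
  simp [hq]

end Frobenius

section Trace

variable {F E : Type*} [Field F] [Fintype F] [Field E] [Fintype E] [Algebra F E]

local notation "q" => Fintype.card F

theorem finrank_eq_of_card_eq_pow {n : ℕ} (hE : Fintype.card E = q ^ n) :
    Module.finrank F E = n :=
  Nat.pow_right_injective Fintype.one_lt_card (Module.card_eq_pow_finrank.symm.trans hE)

theorem algebraMap_trace_eq_add_add (hE : Fintype.card E = q ^ 3) (d : E) :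
    algebraMap F E (Algebra.trace F E d) = d + d ^ q + d ^ q ^ 2 := by
  rw [FiniteField.algebraMap_trace_eq_sum_pow, finrank_eq_of_card_eq_pow hE,
    Nat.card_eq_fintype_card]
  simp [Finset.sum_range_succ]

theorem algebraMap_trace_pow_card_sq_add_card (hE : Fintype.card E = q ^ 3) (d : E) :
    algebraMap F E (Algebra.trace F E (d ^ (q ^ 2 + q))) =
      d ^ q ^ 2 * d ^ q + d * d ^ q ^ 2 + d ^ q * d := by
  have hd : d ^ q ^ 3 = d := hE ▸ FiniteField.pow_card d
  have h1 : (d ^ (q ^ 2 + q)) ^ q = d * d ^ q ^ 2 := by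
    rw [← pow_mul, show (q ^ 2 + q) * q = q ^ 3 + q ^ 2 by ring, pow_add, hd]
  have h2 : (d ^ (q ^ 2 + q)) ^ q ^ 2 = d ^ q * d := by
    rw [← pow_mul, show (q ^ 2 + q) * q ^ 2 = q ^ 3 * q + q ^ 3 by ring, pow_add, pow_mul, hd]
  rw [algebraMap_trace_eq_add_add hE, h1, h2, pow_add]

variable {W : Type*} [Field W] [Algebra F W] [Algebra E W] [IsScalarTower F E W]

theorem trace_add_trace_pow_eq_zero_iff (hE : Fintype.card E = q ^ 3) {α : F} {r : W}
    (hr : r ^ 2 - r = algebraMap F W α) (hrs : r ≠ 1 - r) (d : E) :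
    Algebra.trace F E d + Algebra.trace F E (d ^ (q ^ 2 + q)) + 1 + α = 0 ↔
      (r + algebraMap E W d) * (r + algebraMap E W d ^ q) * (r + algebraMap E W d ^ q ^ 2) =
        (1 - r + algebraMap E W d) * (1 - r + algebraMap E W d ^ q) *
          (1 - r + algebraMap E W d ^ q ^ 2) := by
  set x := algebraMap E W d
  have hmap : algebraMap F W
      (Algebra.trace F E d + Algebra.trace F E (d ^ (q ^ 2 + q)) + 1 + α) =
      (x + x ^ q + x ^ q ^ 2) + (x ^ q ^ 2 * x ^ q + x * x ^ q ^ 2 + x ^ q * x) + 1 +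
        algebraMap F W α := by
    rw [map_add, map_add, map_add, map_one, IsScalarTower.algebraMap_apply F E W,
      IsScalarTower.algebraMap_apply F E W (Algebra.trace F E _), algebraMap_trace_eq_add_add hE,
      algebraMap_trace_pow_card_sq_add_card hE]
    simp only [map_add, map_mul, map_pow, x]
  have hfactor : (r + x) * (r + x ^ q) * (r + x ^ q ^ 2) -
      (1 - r + x) * (1 - r + x ^ q) * (1 - r + x ^ q ^ 2) =
      (2 * r - 1) * ((x + x ^ q + x ^ q ^ 2) + (x ^ q ^ 2 * x ^ q + x * x ^ q ^ 2 + x ^ q * x) +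
        1 + algebraMap F W α) := by
    linear_combination (2 * r - 1) * hr
  have h2r : 2 * r - 1 ≠ 0 := fun h ↦ hrs (by linear_combination h)
  rw [← map_eq_zero_iff _ (algebraMap F W).injective, hmap, ← mul_eq_zero_iff_left h2r,
    ← hfactor, sub_eq_zero]

end Trace

theorem card_pow_eq_one_ne_one {W : Type*} [Field W] [IsSepClosed W] (n : ℕ) [NeZero (n : W)] :
    Nat.card {t : W | t ^ n = 1 ∧ t ≠ 1} = n - 1 := by
  classical
  obtain ⟨ζ, hζ⟩ := HasEnoughRootsOfUnity.exists_primitiveRoot W n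
  have hn : 0 < n := (NeZero.of_neZero_natCast W).pos
  have hset : {t : W | t ^ n = 1 ∧ t ≠ 1} = ((nthRootsFinset n (1 : W)).erase 1 : Set W) := by
    ext t
    simp [mem_nthRootsFinset hn]
  rw [hset, Nat.card_coe_set_eq, Set.ncard_coe_finset,
    Finset.card_erase_of_mem (by simp [mem_nthRootsFinset hn]), hζ.card_nthRootsFinset]

theorem pow_pow_three_eq_of_pow_eq {M : Type*} [Monoid M] {r s : M} {q : ℕ} (hr : r ^ q = s)
    (hs : s ^ q = r) : r ^ q ^ 3 = s := by
  rw [pow_succ, pow_mul, sq, pow_mul, hr, hs, hr]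

theorem sq_sub_add_one_dvd_pow_three_add_one (q : ℕ) : q ^ 2 - q + 1 ∣ q ^ 3 + 1 :=
  ⟨q + 1, by zify [Nat.le_self_pow two_ne_zero q]; ring⟩

/-- If `α ∈ F_q` is such that `x^2 - x - α` is irreducible over `F_q`, then the number of
`d ∈ F_{q^3}` with `Tr(d) + Tr(d^{q^2+q}) + 1 + α = 0` is exactly `q^2 - q`. -/
theorem stmt3 (F E : Type*) [Field F] [Field E] [Fintype F] [Fintype E] [Algebra F E]
    (q : ℕ) (hF : Fintype.card F = q) (hE : Fintype.card E = q ^ 3)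
    (α : F) (hα : Irreducible (Polynomial.X ^ 2 - Polynomial.X - Polynomial.C α)) :
    Nat.card {d : E //
      Algebra.trace F E d + Algebra.trace F E (d ^ (q ^ 2 + q)) + 1 + α = 0} = q ^ 2 - q := by
  subst hF
  obtain ⟨r, hr⟩ : ∃ r : AlgebraicClosure E, r ^ 2 - r = algebraMap F _ α := by
    obtain ⟨r, hr⟩ := IsAlgClosed.exists_aeval_eq_zero (AlgebraicClosure E) (X ^ 2 - X - C α)
      (by rw [show (X ^ 2 - X - C α : F[X]).degree = 2 by compute_degree!]; decide)
    exact ⟨r, by simpa [sub_eq_zero] using hr⟩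
  have hrq := pow_card_eq_one_sub_of_irreducible hα hr
  have hsq : (1 - r) ^ Fintype.card F = r := by
    simpa using pow_card_eq_one_sub_of_irreducible hα (r := 1 - r) (by linear_combination hr)
  have hrs : r ≠ 1 - r := hrq ▸ (pow_card_ne_self_of_irreducible hα hr).symm
  have hrE : r ^ Fintype.card E = 1 - r := hE ▸ pow_pow_three_eq_of_pow_eq hrq hsq
  have hsE : (1 - r) ^ Fintype.card E = r := hE ▸ pow_pow_three_eq_of_pow_eq hsq hrq
  have hrE' : r ^ Fintype.card E ≠ r := hrE.trans_ne hrs.symm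
  have hsE' : (1 - r) ^ Fintype.card E ≠ 1 - r := hsE.trans_ne hrs
  have : NeZero ((Fintype.card F ^ 2 - Fintype.card F + 1 : ℕ) : AlgebraicClosure E) :=
    ⟨by rw [cast_card_sq_sub_card_add_one]; exact one_ne_zero⟩
  rw [← Set.coe_ofPred, ← Nat.card_image_of_injective (div_add_algebraMap_injective hrE' hrs),
    image_div_add_algebraMap hrE hsE hrs (hE ▸ sq_sub_add_one_dvd_pow_three_add_one _),
    card_pow_eq_one_ne_one, Nat.add_sub_cancel]
  intro d
  refine (trace_add_trace_pow_eq_zero_iff hE hr hrs d).trans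
    (mul_mul_eq_mul_mul_iff_pow_eq_one hrq hsq (fun i ↦ ?_) (fun i ↦ ?_)) <;> rw [← map_pow]
  exacts [add_algebraMap_ne_zero_of_pow_card_ne hrE' _,
    add_algebraMap_ne_zero_of_pow_card_ne hsE' _]
end

section
/- Let q be a prime power, F_{q^3} the cubic extension of F_q, Tr the trace and N the norm from F_{q^3} to F_q, and let α in F_q be such that x^2 - x - α is irreducible over F_q. Then the number of d in F_{q^3} satisfying N(d) - Tr(d^{q^2+q})·α - α^2 = 0 is exactly q^2 - q + 1. -/
/-!
Adjoin to `E = 𝔽_{q³}` a root `β` of `x² - x - α`; this gives `L = 𝔽_{q⁶}` with `β^q = 1 - β`.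
For `d ∈ E` the element `v = (β + d)(β + d^q)(β + d^{q²}) = (β + d)^{1 + q² + q⁴}` satisfies
`β² v^q - (1 - β)² v = (2β - 1)(N(d) - Tr(d^{q²+q})α - α²)`, so `d` is a solution iff
`(β + d)^n = β^{2(q-1)}` with `n = (1 + q² + q⁴)(q - 1) = (q³ - 1)(q² - q + 1)`.
Since `L^×` is cyclic of order `n(q + 1)`, this power equation has exactly `n` solutions in `L`;
they all lie outside `E`, and every `z ∈ L \ E` is uniquely `t(β + d)` with `t ∈ E^×`, `d ∈ E`,
where `t^n = 1`. Hence the `n` solutions are `q³ - 1` times the number of `d`.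
-/

open Polynomial Module

theorem mul_pow_eq_pow_mul_iff {M : Type*} [CommMonoidWithZero M] [IsCancelMulZero M] {a b : M}
    (ha : a ≠ 0) (hb : b ≠ 0) {q : ℕ} (hq : q ≠ 0) :
    a * b ^ q = a ^ q * b ↔ b ^ (q - 1) = a ^ (q - 1) := by
  obtain ⟨k, rfl⟩ := Nat.exists_eq_succ_of_ne_zero hq
  rw [Nat.succ_sub_one, pow_succ, pow_succ, show a * (b ^ k * b) = a * b * b ^ k by ac_rfl,
    show a ^ k * a * b = a * b * a ^ k by ac_rfl]
  exact (mul_right_injective₀ (mul_ne_zero ha hb)).eq_iff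

theorem sq_mul_prod_sub_sq_mul_prod {R : Type*} [CommRing R] {β a : R}
    (hβ : β ^ 2 = β + a) (x y z : R) :
    β ^ 2 * ((1 - β + x) * (1 - β + y) * (1 - β + z))
      - (1 - β) ^ 2 * ((β + x) * (β + y) * (β + z))
      = (2 * β - 1) * (x * y * z - a * (x * y + y * z + z * x) - a ^ 2) := by
  linear_combination (2 * β - 1) * (β - β ^ 2 - a - (x * y + y * z + z * x)) * hβ

theorem IsCyclic.card_pow_eq_of_pow_eq_one {G : Type*} [CommGroup G] [IsCyclic G] [Finite G]
    {n m : ℕ} (hG : Nat.card G = n * m) {c : G} (hc : c ^ m = 1) :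
    Nat.card {x : G // x ^ n = c} = n := by
  have hn : 0 < n := Nat.pos_of_mul_pos_right (hG ▸ Nat.card_pos)
  have hrange : (powMonoidHom n : G →* G).range = (powMonoidHom m : G →* G).ker := by
    apply Subgroup.eq_of_le_of_card_ge
    · rintro _ ⟨x, rfl⟩
      rw [MonoidHom.mem_ker, powMonoidHom_apply, powMonoidHom_apply, ← pow_mul, ← hG,
        pow_card_eq_one']
    · rw [IsCyclic.card_powMonoidHom_range, IsCyclic.card_powMonoidHom_ker, hG,
        Nat.gcd_mul_right_left, Nat.gcd_mul_left_left, Nat.mul_div_cancel_left _ hn]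
  obtain ⟨a, rfl⟩ : c ∈ (powMonoidHom n : G →* G).range := hrange ▸ hc
  refine (Nat.card_congr ((powMonoidHom n : G →* G).fiberEquivKer a)).trans ?_
  rw [IsCyclic.card_powMonoidHom_ker, hG, Nat.gcd_mul_right_left]

theorem FiniteField.card_pow_eq_of_pow_eq_one {L : Type*} [Field L] [Finite L] {n m : ℕ}
    (hL : Nat.card L - 1 = n * m) {c : L} (hc0 : c ≠ 0) (hc : c ^ m = 1) :
    Nat.card {x : L // x ^ n = c} = n := by
  have hn : n ≠ 0 := by
    rintro rfl
    have := Finite.one_lt_card (α := L)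
    omega
  let e : {x : L // x ^ n = c} ≃ {u : Lˣ // u ^ n = Units.mk0 c hc0} :=
    { toFun x := ⟨Units.mk0 x fun h ↦ hc0 (by rw [← x.2, h, zero_pow hn]), Units.ext x.2⟩
      invFun u := ⟨u.1, by simpa using congrArg Units.val u.2⟩
      left_inv _ := rfl
      right_inv _ := Subtype.ext (Units.ext rfl) }
  rw [Nat.card_congr e]
  exact IsCyclic.card_pow_eq_of_pow_eq_one (by rw [Nat.card_units, hL])
    (Units.ext (by simpa using hc))

theorem FiniteField.mem_range_algebraMap_of_pow_card_eq {K L : Type*} [Field K] [Fintype K]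
    [Field L] [Algebra K L] {x : L} (hx : x ^ Fintype.card K = x) :
    x ∈ Set.range (algebraMap K L) := by
  have hq := Fintype.one_lt_card (α := K)
  have hroots := FiniteField.roots_X_pow_card_sub_X K
  have hmem : x ∈ ((X ^ Fintype.card K - X : K[X]).map (algebraMap K L)).roots := by
    rw [mem_roots_map (FiniteField.X_pow_card_sub_X_ne_zero K hq)]
    simp [hx]
  rw [← roots_map_of_injective_of_card_eq_natDegree (algebraMap K L).injective
    (by rw [hroots, FiniteField.X_pow_card_sub_X_natDegree_eq K hq]; rfl), hroots] at hmem
  obtain ⟨a, -, rfl⟩ := Multiset.mem_map.mp hmem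
  exact ⟨a, rfl⟩

theorem Polynomial.Irreducible.map_of_natDegree_eq_two_of_odd_finrank {F E : Type*} [Field F]
    [Field E] [Algebra F E] [FiniteDimensional F E] {p : F[X]} (hp : Irreducible p)
    (hdeg : p.natDegree = 2) (hodd : Odd (finrank F E)) :
    Irreducible (p.map (algebraMap F E)) := by
  have hdeg' : (p.map (algebraMap F E)).natDegree = 2 := by rw [natDegree_map, hdeg]
  rw [irreducible_iff_roots_eq_zero_of_degree_le_three (by omega) (by omega)]
  refine Multiset.eq_zero_of_forall_notMem fun e he ↦ ?_
  have hroot : aeval e p = 0 := by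
    rwa [mem_roots_map hp.ne_zero, ← aeval_def] at he
  have hdvd := minpoly.degree_dvd (IsIntegral.of_finite F e)
  rw [← minpoly.eq_of_irreducible hp hroot,
    natDegree_mul_C (inv_ne_zero (leadingCoeff_ne_zero.mpr hp.ne_zero)), hdeg] at hdvd
  exact Nat.not_even_iff_odd.mpr hodd (even_iff_two_dvd.mpr hdvd)

theorem exists_algebraMap_add_algebraMap_mul_eq {E L : Type*} [Field E] [Field L] [Algebra E L]
    {β : L} (hβ : β ∉ Set.range (algebraMap E L)) (hL : finrank E L = 2) (z : L) :
    ∃ a b : E, algebraMap E L a + algebraMap E L b * β = z := by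
  have hind : LinearIndependent E ![1, β] :=
    (LinearIndependent.pair_iff' one_ne_zero).mpr fun a h ↦
      hβ ⟨a, by simpa [Algebra.smul_def] using h⟩
  have hspan := hind.span_eq_top_of_card_eq_finrank (by simp [hL])
  obtain ⟨c, hc⟩ :=
    (Submodule.mem_span_range_iff_exists_fun E).mp (hspan ▸ Submodule.mem_top (x := z))
  exact ⟨c 0, c 1, by simpa [Fin.sum_univ_two, Algebra.smul_def] using hc⟩

theorem two_mul_sub_one_ne_zero_of_notMem_range {E L : Type*} [Field E] [Field L] [Algebra E L]
    {β : L} (hβ : β ∉ Set.range (algebraMap E L)) : 2 * β - 1 ≠ 0 := fun h ↦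
  hβ ⟨2⁻¹, by
    rw [map_inv₀, map_ofNat]; exact (eq_inv_of_mul_eq_one_right (sub_eq_zero.mp h)).symm⟩

theorem eq_and_eq_of_algebraMap_mul_add_eq {E L : Type*} [Field E] [Field L] [Algebra E L]
    {β : L} (hβ : β ∉ Set.range (algebraMap E L)) {t t' d d' : E} (ht : t ≠ 0)
    (h : algebraMap E L t * (β + algebraMap E L d) = algebraMap E L t' * (β + algebraMap E L d')) :
    t = t' ∧ d = d' := by
  obtain rfl : t = t' := by
    by_contra hne
    refine hβ ⟨(t' * d' - t * d) / (t - t'), ?_⟩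
    rw [map_div₀, div_eq_iff ((_root_.map_ne_zero _).mpr (sub_ne_zero.mpr hne))]
    simp only [map_sub, map_mul]
    linear_combination -h
  refine ⟨rfl, (algebraMap E L).injective ?_⟩
  simpa using mul_left_cancel₀ ((_root_.map_ne_zero (algebraMap E L)).mpr ht) h

theorem card_pow_eq_eq_card_units_mul {E L : Type*} [Field E] [Field L] [Algebra E L]
    {β : L} (hβ : β ∉ Set.range (algebraMap E L)) (hL : finrank E L = 2) {n : ℕ}
    (hn : Nat.card Eˣ ∣ n) {c : L} (hc0 : c ≠ 0) (hc1 : c ≠ 1) :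
    Nat.card {z : L // z ^ n = c} =
      Nat.card Eˣ * Nat.card {d : E // (β + algebraMap E L d) ^ n = c} := by
  have hpow (t : Eˣ) : algebraMap E L t ^ n = 1 := by
    obtain ⟨k, rfl⟩ := hn
    rw [← map_pow, ← Units.val_pow_eq_pow_val, pow_mul, pow_card_eq_one', one_pow,
      Units.val_one, map_one]
  have hnotE (a : E) : algebraMap E L a ^ n ≠ c := by
    obtain rfl | ha := eq_or_ne a 0
    · rw [map_zero, zero_pow_eq]
      split_ifs
      exacts [hc1.symm, hc0.symm]
    · exact (hpow (Units.mk0 a ha)).trans_ne hc1.symm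
  rw [← Nat.card_prod]
  refine (Nat.card_congr (Equiv.ofBijective (fun td ↦
    ⟨algebraMap E L td.1 * (β + algebraMap E L td.2), by rw [mul_pow, hpow, one_mul, td.2.2]⟩)
    ⟨?_, ?_⟩)).symm
  · rintro ⟨t, d⟩ ⟨t', d'⟩ h
    obtain ⟨ht, hd⟩ := eq_and_eq_of_algebraMap_mul_add_eq hβ t.ne_zero (congrArg Subtype.val h)
    exact Prod.ext (Units.ext ht) (Subtype.ext hd)
  · rintro ⟨z, hz⟩
    obtain ⟨a, b, rfl⟩ := exists_algebraMap_add_algebraMap_mul_eq hβ hL z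
    have hb : b ≠ 0 := by
      rintro rfl
      exact hnotE a (by simpa using hz)
    have hz' : algebraMap E L a + algebraMap E L b * β =
        algebraMap E L b * (β + algebraMap E L (a / b)) := by
      have : algebraMap E L b ≠ 0 := (_root_.map_ne_zero _).mpr hb
      rw [map_div₀]
      field_simp
      ring
    refine ⟨(Units.mk0 b hb, ⟨a / b, ?_⟩), Subtype.ext hz'.symm⟩
    rwa [hz', mul_pow, show algebraMap E L b ^ n = 1 from hpow (Units.mk0 b hb), one_mul] at hz

theorem AdjoinRoot.root_notMem_range_algebraMap {K : Type*} [Field K] {f : K[X]}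
    [Fact (Irreducible f)] (hf : f.natDegree ≠ 1) :
    root f ∉ Set.range (algebraMap K (AdjoinRoot f)) := by
  rintro ⟨e, he⟩
  have hroot : f.IsRoot e := by
    apply (algebraMap K (AdjoinRoot f)).injective
    rw [map_zero, ← aeval_algebraMap_apply_eq_algebraMap_eval, he, aeval_eq, mk_self]
  exact hf (natDegree_eq_of_degree_eq_some (degree_eq_one_of_irreducible_of_root Fact.out hroot))

namespace FiniteField

variable {F : Type*} [Field F] [Fintype F]

local notation "q" => Fintype.card F

theorem add_pow_card_pow {L : Type*} [CommRing L] [Algebra F L] (x y : L) (k : ℕ) :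
    (x + y) ^ q ^ k = x ^ q ^ k + y ^ q ^ k := by
  simpa [AlgHom.coe_pow, coe_frobeniusAlgHom, pow_iterate] using
    map_add (frobeniusAlgHom F L ^ k) x y

theorem sub_pow_card_pow {L : Type*} [CommRing L] [Algebra F L] (x y : L) (k : ℕ) :
    (x - y) ^ q ^ k = x ^ q ^ k - y ^ q ^ k := by
  simpa [AlgHom.coe_pow, coe_frobeniusAlgHom, pow_iterate] using
    map_sub (frobeniusAlgHom F L ^ k) x y

theorem pow_card_eq_one_sub {L : Type*} [Field L] [Algebra F L] {α : F} {β : L}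
    (hβ : β ^ 2 = β + algebraMap F L α) (hβF : β ∉ Set.range (algebraMap F L)) :
    β ^ q = 1 - β := by
  have hβq : (β ^ q) ^ 2 = β ^ q + algebraMap F L α := by
    simpa only [map_pow, map_add, AlgHom.commutes, coe_frobeniusAlgHom] using
      congrArg (frobeniusAlgHom F L) hβ
  have : (β ^ q - β) * (β ^ q - (1 - β)) = 0 := by linear_combination hβq - hβ
  rcases mul_eq_zero.mp this with h | h
  · exact absurd (mem_range_algebraMap_of_pow_card_eq (sub_eq_zero.mp h)) hβF
  · exact sub_eq_zero.mp h

theorem pow_card_sq_eq_self {L : Type*} [CommRing L] [Algebra F L] {β : L}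
    (hβq : β ^ q = 1 - β) : β ^ q ^ 2 = β := by
  simpa [sq, pow_mul, hβq] using sub_pow_card_pow (F := F) 1 β 1

theorem algebraMap_norm_sub_trace_mul_sub_sq {E : Type*} [Field E] [Fintype E] [Algebra F E]
    (hE : finrank F E = 3) (α : F) (d : E) :
    algebraMap F E (Algebra.norm F d - Algebra.trace F E (d ^ (q ^ 2 + q)) * α - α ^ 2) =
      d * d ^ q * d ^ q ^ 2 - algebraMap F E α * (d * d ^ q + d ^ q * d ^ q ^ 2 + d ^ q ^ 2 * d)
        - algebraMap F E α ^ 2 := by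
  have hd : d ^ q ^ 3 = d := by rw [← hE, ← Module.card_eq_pow_finrank, FiniteField.pow_card]
  have h1 : (d ^ (q ^ 2 + q)) ^ q = d * d ^ q ^ 2 := by
    rw [← pow_mul, show (q ^ 2 + q) * q = q ^ 3 + q ^ 2 by ring, pow_add, hd]
  have h2 : (d ^ (q ^ 2 + q)) ^ q ^ 2 = d ^ q * d := by
    rw [← pow_mul, show (q ^ 2 + q) * q ^ 2 = q ^ 3 * q + q ^ 3 by ring, pow_add, pow_mul, hd]
  rw [map_sub, map_sub, map_mul, map_pow (algebraMap F E) α, algebraMap_norm_eq_prod_pow,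
    algebraMap_trace_eq_sum_pow, hE, Nat.card_eq_fintype_card]
  simp only [Finset.prod_range_succ, Finset.sum_range_succ, Finset.prod_range_zero,
    Finset.sum_range_zero, pow_zero, pow_one, h1, h2]
  ring

theorem add_pow_eq_sq_pow_iff {L : Type*} [Field L] [Algebra F L] {α : F} {β D : L}
    (hβ : β ^ 2 = β + algebraMap F L α) (hβq : β ^ q = 1 - β) (hβ0 : β ≠ 0)
    (h2β : 2 * β - 1 ≠ 0) (hx : β + D ≠ 0) (hD : D ^ q ^ 3 = D) :
    (β + D) ^ ((q ^ 4 + q ^ 2 + 1) * (q - 1)) = (β ^ 2) ^ (q - 1) ↔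
      D * D ^ q * D ^ q ^ 2 - algebraMap F L α * (D * D ^ q + D ^ q * D ^ q ^ 2 + D ^ q ^ 2 * D)
        - algebraMap F L α ^ 2 = 0 := by
  have hq : q ≠ 0 := Fintype.card_ne_zero
  have hβq2 := pow_card_sq_eq_self hβq
  have hβq4 : β ^ q ^ 4 = β := by rw [show q ^ 4 = q ^ 2 * q ^ 2 by ring, pow_mul, hβq2, hβq2]
  have hDq4 : D ^ q ^ 4 = D ^ q := by rw [show q ^ 4 = q ^ 3 * q by ring, pow_mul, hD]
  set v := (β + D) * (β + D ^ q) * (β + D ^ q ^ 2)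
  have hv : (β + D) ^ (q ^ 4 + q ^ 2 + 1) = v := by
    rw [pow_add, pow_add, pow_one, add_pow_card_pow, add_pow_card_pow, hβq2, hβq4, hDq4]
    ring
  have hvq : v ^ q = (1 - β + D) * (1 - β + D ^ q) * (1 - β + D ^ q ^ 2) := by
    have h (y z : L) : (y + z) ^ q = y ^ q + z ^ q := by
      simpa using add_pow_card_pow (F := F) y z 1
    rw [mul_pow, mul_pow, h, h, h, hβq, ← pow_mul, ← pow_mul, ← sq, ← pow_succ, hD]
    ring
  have hβ2q : (β ^ 2) ^ q = (1 - β) ^ 2 := by rw [← pow_mul, mul_comm, pow_mul, hβq]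
  rw [pow_mul, hv, ← mul_pow_eq_pow_mul_iff (pow_ne_zero 2 hβ0) (hv ▸ pow_ne_zero _ hx) hq, hβ2q,
    hvq, ← sub_eq_zero, sq_mul_prod_sub_sq_mul_prod hβ, mul_eq_zero, or_iff_right h2β]

theorem norm_sub_trace_mul_sub_sq_eq_zero_iff {E L : Type*} [Field E] [Fintype E] [Field L]
    [Algebra F E] [Algebra E L] [Algebra F L] [IsScalarTower F E L] (hE : finrank F E = 3)
    {α : F} {β : L} (hβ : β ^ 2 = β + algebraMap F L α) (hβq : β ^ q = 1 - β) (hβ0 : β ≠ 0)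
    (h2β : 2 * β - 1 ≠ 0) (hβE : β ∉ Set.range (algebraMap E L)) (d : E) :
    Algebra.norm F d - Algebra.trace F E (d ^ (q ^ 2 + q)) * α - α ^ 2 = 0 ↔
      (β + algebraMap E L d) ^ ((q ^ 4 + q ^ 2 + 1) * (q - 1)) = (β ^ 2) ^ (q - 1) := by
  have hD : (algebraMap E L d) ^ q ^ 3 = algebraMap E L d := by
    rw [← map_pow, ← hE, ← Module.card_eq_pow_finrank, FiniteField.pow_card]
  have hx : β + algebraMap E L d ≠ 0 := fun h ↦
    hβE ⟨-d, by rw [map_neg]; linear_combination -h⟩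
  rw [add_pow_eq_sq_pow_iff hβ hβq hβ0 h2β hx hD, ← _root_.map_eq_zero (algebraMap F L),
    IsScalarTower.algebraMap_apply F E L, algebraMap_norm_sub_trace_mul_sub_sq hE]
  simp only [map_sub, map_mul, map_add, map_pow, ← IsScalarTower.algebraMap_apply]

theorem sq_pow_card_sub_one_ne_one {L : Type*} [Field L] {β : L} (hβq : β ^ q = 1 - β)
    (h2β : 2 * β - 1 ≠ 0) : (β ^ 2) ^ (q - 1) ≠ 1 := by
  intro h
  have hβ2 : (β ^ 2) ^ (q - 1) * β ^ 2 = (1 - β) ^ 2 := by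
    rw [pow_sub_one_mul Fintype.card_ne_zero, ← pow_mul, mul_comm, pow_mul, hβq]
  rw [h, one_mul] at hβ2
  exact h2β (by linear_combination hβ2)

theorem sq_pow_card_sub_one_pow_card_add_one {L : Type*} [Field L] [Algebra F L] {β : L}
    (hβq : β ^ q = 1 - β) (hβ0 : β ≠ 0) : ((β ^ 2) ^ (q - 1)) ^ (q + 1) = 1 := by
  have hq : 1 ≤ q := Fintype.card_pos
  rw [← pow_mul, show (q - 1) * (q + 1) = q ^ 2 - 1 by zify [hq, Nat.one_le_pow 2 q hq]; ring]
  refine (mul_eq_right₀ (pow_ne_zero 2 hβ0)).mp ?_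
  rw [pow_sub_one_mul (by positivity), ← pow_mul, mul_comm, pow_mul, pow_card_sq_eq_self hβq]

theorem card_norm_sub_trace_mul_sub_sq_eq_zero {E L : Type*} [Field E] [Fintype E] [Field L]
    [Algebra F E] [Algebra E L] [Algebra F L] [IsScalarTower F E L]
    (hE : finrank F E = 3) (hL : finrank E L = 2) {α : F} {β : L}
    (hβ : β ^ 2 = β + algebraMap F L α) (hβE : β ∉ Set.range (algebraMap E L)) :
    Nat.card {d : E // Algebra.norm F d - Algebra.trace F E (d ^ (q ^ 2 + q)) * α - α ^ 2 = 0} =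
      q ^ 2 - q + 1 := by
  have : Module.Finite E L := Module.finite_of_finrank_eq_succ hL
  have : Finite L := Module.finite_of_finite E
  have hq : 1 < q := Fintype.one_lt_card
  have hβF : β ∉ Set.range (algebraMap F L) := by
    rintro ⟨a, rfl⟩
    exact hβE ⟨algebraMap F E a, (IsScalarTower.algebraMap_apply F E L a).symm⟩
  have hβq := pow_card_eq_one_sub hβ hβF
  have hβ0 : β ≠ 0 := fun h ↦ hβE ⟨0, by rw [map_zero, h]⟩
  have h2β := two_mul_sub_one_ne_zero_of_notMem_range hβE
  have hEcard : Fintype.card E = q ^ 3 := by rw [Module.card_eq_pow_finrank (K := F), hE]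
  have hunits : Nat.card Eˣ = q ^ 3 - 1 := by
    rw [Nat.card_units, Nat.card_eq_fintype_card, hEcard]
  have hn : (q ^ 4 + q ^ 2 + 1) * (q - 1) = (q ^ 3 - 1) * (q ^ 2 - q + 1) := by
    zify [hq.le, Nat.one_le_pow 3 q (by omega), Nat.le_self_pow two_ne_zero q]
    ring
  have hLcard : Nat.card L - 1 = (q ^ 4 + q ^ 2 + 1) * (q - 1) * (q + 1) := by
    rw [Module.natCard_eq_pow_finrank (K := E), hL, Nat.card_eq_fintype_card, hEcard]
    zify [hq.le, Nat.one_le_pow 2 (q ^ 3) (by positivity)]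
    ring
  have hc0 : (β ^ 2) ^ (q - 1) ≠ 0 := pow_ne_zero _ (pow_ne_zero _ hβ0)
  have hcount := FiniteField.card_pow_eq_of_pow_eq_one hLcard hc0
    (sq_pow_card_sub_one_pow_card_add_one hβq hβ0)
  rw [card_pow_eq_eq_card_units_mul hβE hL (by rw [hunits, hn]; exact dvd_mul_right _ _) hc0
    (sq_pow_card_sub_one_ne_one hβq h2β), hunits] at hcount
  rw [Nat.card_congr (Equiv.subtypeEquivRight
    (norm_sub_trace_mul_sub_sq_eq_zero_iff hE hβ hβq hβ0 h2β hβE))]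
  refine Nat.eq_of_mul_eq_mul_left (Nat.sub_pos_of_lt (Nat.one_lt_pow three_ne_zero hq)) ?_
  rw [hcount, hn]

end FiniteField

/-- If `α ∈ F_q` is such that `x^2 - x - α` is irreducible over `F_q`, then the number of
`d ∈ F_{q^3}` with `N(d) - Tr(d^{q^2+q})·α - α^2 = 0` is exactly `q^2 - q + 1`. -/
theorem stmt4 (F E : Type*) [Field F] [Field E] [Fintype F] [Fintype E] [Algebra F E]
    (q : ℕ) (hF : Fintype.card F = q) (hE : Fintype.card E = q ^ 3)
    (α : F) (hα : Irreducible (Polynomial.X ^ 2 - Polynomial.X - Polynomial.C α)) :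
    Nat.card {d : E //
      Algebra.norm F d - Algebra.trace F E (d ^ (q ^ 2 + q)) * α - α ^ 2 = 0} =
      q ^ 2 - q + 1 := by
  subst hF
  have hFE : finrank F E = 3 :=
    Nat.pow_right_injective Fintype.one_lt_card (Module.card_eq_pow_finrank.symm.trans hE)
  have hdeg : (X ^ 2 - X - C α).natDegree = 2 := by compute_degree!
  set p : E[X] := (X ^ 2 - X - C α).map (algebraMap F E)
  have hp : Irreducible p :=
    hα.map_of_natDegree_eq_two_of_odd_finrank hdeg (by rw [hFE]; decide)
  have := Fact.mk hp
  have hroot : AdjoinRoot.root p ^ 2 = AdjoinRoot.root p + algebraMap F (AdjoinRoot p) α := by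
    have h := AdjoinRoot.mk_self (f := p)
    rw [← AdjoinRoot.aeval_eq, aeval_map_algebraMap] at h
    simp only [map_sub, map_pow, aeval_X, aeval_C] at h
    linear_combination h
  have hpdeg : p.natDegree = 2 := by rw [natDegree_map, hdeg]
  exact FiniteField.card_norm_sub_trace_mul_sub_sq_eq_zero hFE
    (by rw [(AdjoinRoot.powerBasis hp.ne_zero).finrank, AdjoinRoot.powerBasis_dim, hpdeg]) hroot
    (AdjoinRoot.root_notMem_range_algebraMap (by rw [hpdeg]; decide))
end

section
/- Let q be a prime power and O as above. Then the hyperplane ⟨(0,0,1,0)⟩^⊥ meets O in exactly q^2 + 1 points, and the hyperplane ⟨(1,0,0,1)⟩^⊥ meets O in exactly q^2 + q + 1 points. -/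
/-!
At `P(∞)` the form against `(0,0,1,0)` vanishes and against `(1,0,0,1)` equals `-1`; at `P(x)`
the two values are `-Tr(x)` and `1 - N(x)`. The counts are therefore `|ker Tr| + 1` and
`|ker N|` on `F_{q^3}ˣ`, and both kernels are fibres of surjective homomorphisms
(`Tr : F_{q^3} → F_q` additively, `N : F_{q^3}ˣ → F_qˣ` multiplicatively), of sizes
`q^3 / q = q^2` and `(q^3 - 1) / (q - 1) = q^2 + q + 1`.
-/

theorem MonoidHom.card_ker_mul_card_of_surjective {G H : Type*} [Group G] [Group H] (f : G →* H)
    (hf : Function.Surjective f) : Nat.card f.ker * Nat.card H = Nat.card G := by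
  rw [← f.ker.card_mul_index, Subgroup.index_ker, f.range_eq_top_of_surjective hf,
    Subgroup.card_top]

theorem Nat.card_subtype_option {α : Type*} [Finite α] (p : Option α → Prop)
    [DecidablePred p] :
    Nat.card {o // p o} = Nat.card {a // p (some a)} + if p none then 1 else 0 := by
  have := Fintype.ofFinite α
  simp only [Nat.card_eq_fintype_card, Fintype.card_subtype, Finset.card_filter,
    Fintype.sum_option]
  omega

namespace FiniteField

variable (K L : Type*) [Field K] [Field L] [Finite L] [Algebra K L]

theorem card_trace_eq_zero_mul_card :
    Nat.card {x : L // Algebra.trace K L x = 0} * Nat.card K = Nat.card L := by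
  let f := (Algebra.trace K L).toAddMonoidHom
  rw [← f.ker.card_mul_index, AddSubgroup.index_ker,
    f.range_eq_top_of_surjective (Algebra.trace_surjective K L), AddSubgroup.card_top]
  rfl

def normOneEquivKerUnitsMapNorm :
    {x : L // Algebra.norm K x = 1} ≃ (Units.map (Algebra.norm K (S := L))).ker where
  toFun x := ⟨Units.mk0 x.1 fun h ↦ by simpa [h] using x.2, Units.ext x.2⟩
  invFun u := ⟨u.1, congrArg Units.val u.2⟩
  left_inv _ := rfl
  right_inv _ := Subtype.ext (Units.ext rfl)

theorem card_norm_eq_one_mul_card_sub_one :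
    Nat.card {x : L // Algebra.norm K x = 1} * (Nat.card K - 1) = Nat.card L - 1 := by
  rw [Nat.card_congr (normOneEquivKerUnitsMapNorm K L), ← Nat.card_units, ← Nat.card_units]
  exact MonoidHom.card_ker_mul_card_of_surjective _ (unitsMap_norm_surjective K L)

end FiniteField

/-- With `O` the set of `q^3 + 1` points `P(x) = ⟨(1, x, x^{q+q^2}, N(x))⟩` for `x ∈ F_{q^3}`
together with `P(∞) = ⟨(0,0,0,1)⟩`, the hyperplane `⟨(0,0,1,0)⟩^⊥` meets `O` in exactly
`q^2 + 1` points and the hyperplane `⟨(1,0,0,1)⟩^⊥` meets `O` in exactly `q^2 + q + 1`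
points. -/
theorem stmt13 (F E : Type*) [Field F] [Field E] [Fintype F] [Fintype E] [Algebra F E]
    (q : ℕ) (hF : Fintype.card F = q) (hE : Fintype.card E = q ^ 3)
    (A : (F × E × E × F) → (F × E × E × F) → F)
    (hA : ∀ u v : F × E × E × F,
      A u v = u.1 * v.2.2.2 - u.2.2.2 * v.1 +
        Algebra.trace F E (u.2.2.1 * v.2.1 - u.2.1 * v.2.2.1))
    (P : Option E → F × E × E × F)
    (hP : ∀ x : E, P (some x) = (1, x, x ^ (q + q ^ 2), Algebra.norm F x))
    (hPinf : P none = ((0 : F), (0 : E), (0 : E), (1 : F))) :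
    Nat.card {o : Option E // A (P o) ((0 : F), (0 : E), (1 : E), (0 : F)) = 0} = q ^ 2 + 1 ∧
    Nat.card {o : Option E // A (P o) ((1 : F), (0 : E), (0 : E), (1 : F)) = 0} =
      q ^ 2 + q + 1 := by
  classical
  rw [Fintype.card_eq_nat_card] at hF hE
  obtain ⟨r, hr, rfl⟩ : ∃ r, 0 < r ∧ q = r + 1 :=
    ⟨q - 1, by have := Finite.one_lt_card (α := F); omega⟩
  have htrace := FiniteField.card_trace_eq_zero_mul_card F E
  have hnorm := FiniteField.card_norm_eq_one_mul_card_sub_one F E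
  rw [hF, hE, Nat.add_sub_cancel] at hnorm
  rw [hF, hE] at htrace
  refine ⟨?_, ?_⟩
  · have hker : Nat.card {x : E // Algebra.trace F E x = 0} = (r + 1) ^ 2 :=
      Nat.eq_of_mul_eq_mul_right (by omega : 0 < r + 1) (by rw [htrace]; ring)
    have hsome (x : E) : A (P (some x)) (0, 0, 1, 0) = 0 ↔ Algebra.trace F E x = 0 := by
      simp [hA, hP]
    rw [Nat.card_subtype_option, if_pos (by simp [hA, hPinf]),
      Nat.card_congr (Equiv.subtypeEquivRight hsome), hker]
  · have hker : Nat.card {x : E // Algebra.norm F x = 1} = (r + 1) ^ 2 + (r + 1) + 1 :=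
      Nat.eq_of_mul_eq_mul_right hr (by rw [hnorm]; exact Nat.sub_eq_of_eq_add (by ring))
    have hsome (x : E) : A (P (some x)) (1, 0, 0, 1) = 0 ↔ Algebra.norm F x = 1 := by
      simp [hA, hP, sub_eq_zero, eq_comm (a := (1 : F))]
    rw [Nat.card_subtype_option, if_neg (by simp [hA, hPinf]),
      Nat.card_congr (Equiv.subtypeEquivRight hsome), hker]
end
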